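/- Let ξ ∈ S¹ ⊂ ℂ and let n = 2m be an even positive integer. The linking form e(n,ε,ξ,ℂ) on H = ℂ[t^{±1}]/(t-ξ)^{2m}, defined by (x,y) ↦ ε·x·y#/((t-ξ)^m(t⁻¹-conj(ξ))^m), is metabolic: L = (t-ξ)^m·H satisfies L = L^⊥. -/

import Mathlib

open LaurentPolynomial Complex

/-- The involution `#` on complex Laurent polynomials: `t ↦ t⁻¹` together with complex
conjugation of the coefficients. -/
noncomputable def lstar (p : LaurentPolynomial ℂ) : LaurentPolynomial ℂ :=
  AddMonoidAlgebra.ofCoeff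
    (Finsupp.mapRange (starRingEnd ℂ) (map_zero _) (LaurentPolynomial.invert p).coeff)

/-- Representative-level formula for the basic pairing `e(2m,ε,ξ,ℂ)`:
`(x, y) ↦ ε·x·y# / ((t-ξ)^m (t⁻¹-conj ξ)^m)`, computed in the fraction field `Q` of
`ℂ[t^{±1}]`.  Note that `(t⁻¹ - conj ξ) = (t - ξ)#`. -/
noncomputable def lamEC (Q : Type*) [Field Q] [Algebra (LaurentPolynomial ℂ) Q]
    (ε : ℝ) (ξ : ℂ) (m : ℕ) (x y : LaurentPolynomial ℂ) : Q :=
  algebraMap (LaurentPolynomial ℂ) Q (C (ε : ℂ) * (x * lstar y)) *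
    (algebraMap (LaurentPolynomial ℂ) Q
      ((T 1 - C ξ) ^ m * (lstar (T 1 - C ξ)) ^ m))⁻¹

/-! With `u = t - ξ`, the class of `ε·x·y#/(u^m u#^m)` in `Q/ℂ[t^{±1}]` vanishes exactly when
`u^m u#^m ∣ x·y#`, as `ε` is a unit. Since `#` is multiplicative, this holds whenever `u^m`
divides both `x` and `y`. Conversely, pairing `x` with `y = u^m` gives `u^m u#^m ∣ x·u#^m`, and
`u#^m` cancels because `#` is injective and `ℂ[t^{±1}]` is a domain. -/

noncomputable def lstarRingHom : LaurentPolynomial ℂ →+* LaurentPolynomial ℂ :=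
  (AddMonoidAlgebra.mapRingHom ℤ (starRingEnd ℂ)).comp (invert (R := ℂ)).toRingHom

lemma lstarRingHom_apply (p : LaurentPolynomial ℂ) : lstarRingHom p = lstar p := rfl

lemma lstarRingHom_injective : Function.Injective lstarRingHom :=
  (AddMonoidAlgebra.map_injective _ (starRingEnd ℂ).injective).comp invert.injective

lemma lstar_ne_zero {p : LaurentPolynomial ℂ} (hp : p ≠ 0) : lstar p ≠ 0 :=
  (map_ne_zero_iff _ lstarRingHom_injective).mpr hp

lemma T_one_sub_C_ne_zero (ξ : ℂ) : (T 1 - C ξ : LaurentPolynomial ℂ) ≠ 0 := by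
  rw [← Polynomial.toLaurent_X, ← Polynomial.toLaurent_C, ← map_sub]
  exact (map_ne_zero_iff _ Polynomial.toLaurent_injective).mpr (Polynomial.X_sub_C_ne_zero ξ)

lemma Submodule.Quotient.mk_algebraMap_mul_inv_eq_zero_iff {R Q : Type*} [CommRing R] [Field Q]
    [Algebra R Q] [IsFractionRing R Q] {a b : R} (hb : b ≠ 0) :
    (Submodule.Quotient.mk (algebraMap R Q a * (algebraMap R Q b)⁻¹)
        : Q ⧸ LinearMap.range (Algebra.linearMap R Q)) = 0 ↔ b ∣ a := by
  have hbQ : algebraMap R Q b ≠ 0 :=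
    (map_ne_zero_iff _ (IsFractionRing.injective R Q)).mpr hb
  rw [Submodule.Quotient.mk_eq_zero, LinearMap.mem_range]
  simp only [Algebra.linearMap_apply, eq_mul_inv_iff_mul_eq₀ hbQ, ← map_mul,
    (IsFractionRing.injective R Q).eq_iff, dvd_def, eq_comm (a := a), mul_comm b]

lemma pow_dvd_iff_forall_pow_dvd_mul_map {R F : Type*} [CommMonoidWithZero R] [IsCancelMulZero R]
    [FunLike F R R] [MonoidHomClass F R R] (σ : F) {u x : R} (hσu : σ u ≠ 0) (m : ℕ) :
    u ^ m ∣ x ↔ ∀ y, u ^ m ∣ y → u ^ m * σ u ^ m ∣ x * σ y := by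
  constructor
  · rintro ⟨c, rfl⟩ y ⟨d, rfl⟩
    rw [map_mul, map_pow]
    exact mul_dvd_mul (dvd_mul_right _ _) (dvd_mul_right _ _)
  · intro h
    have hx := h (u ^ m) dvd_rfl
    rw [map_pow] at hx
    exact (mul_dvd_mul_iff_right (pow_ne_zero m hσu)).mp hx

lemma lamEC_mk_eq_zero_iff (Q : Type*) [Field Q] [Algebra (LaurentPolynomial ℂ) Q]
    [IsFractionRing (LaurentPolynomial ℂ) Q] {ε : ℝ} (hε : ε ≠ 0) (ξ : ℂ) (m : ℕ)
    (x y : LaurentPolynomial ℂ) :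
    (Submodule.Quotient.mk (lamEC Q ε ξ m x y)
        : Q ⧸ LinearMap.range (Algebra.linearMap (LaurentPolynomial ℂ) Q)) = 0 ↔
      (T 1 - C ξ) ^ m * lstar (T 1 - C ξ) ^ m ∣ x * lstar y := by
  have hu := T_one_sub_C_ne_zero ξ
  rw [lamEC, Submodule.Quotient.mk_algebraMap_mul_inv_eq_zero_iff
    (mul_ne_zero (pow_ne_zero m hu) (pow_ne_zero m (lstar_ne_zero hu)))]
  exact ((isUnit_iff_ne_zero.mpr (Complex.ofReal_ne_zero.mpr hε)).map C).dvd_mul_left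

theorem basic_complex_pairing_even_metabolic_general
    (Q : Type*) [Field Q] [Algebra (LaurentPolynomial ℂ) Q]
    [IsFractionRing (LaurentPolynomial ℂ) Q]
    (ξ : ℂ) (m : ℕ) (ε : ℝ) (hε : ε = 1 ∨ ε = -1) :
    ∀ x : LaurentPolynomial ℂ,
      ((T 1 - C ξ) ^ m ∣ x ↔
        ∀ y : LaurentPolynomial ℂ, (T 1 - C ξ) ^ m ∣ y →
          (Submodule.Quotient.mk (lamEC Q ε ξ m x y)
              : Q ⧸ LinearMap.range (Algebra.linearMap (LaurentPolynomial ℂ) Q)) = 0) := by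
  have hε0 : ε ≠ 0 := by rcases hε with rfl | rfl <;> norm_num
  have hσu : lstarRingHom (T 1 - C ξ) ≠ 0 := lstar_ne_zero (T_one_sub_C_ne_zero ξ)
  intro x
  simp only [lamEC_mk_eq_zero_iff Q hε0, ← lstarRingHom_apply]
  exact pow_dvd_iff_forall_pow_dvd_mul_map lstarRingHom hσu m

/-- **The basic complex pairing `e(2m,ε,ξ,ℂ)` of even order is metabolic.**
For `ξ ∈ S¹` and `n = 2m` even and positive, the submodule
`L = (t-ξ)^m·H` of `H = ℂ[t^{±1}]/(t-ξ)^{2m}` satisfies `L = L^⊥`: a class `[x]` lies in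
`L`, i.e. `(t-ξ)^m ∣ x`, if and only if it pairs to zero with all of `L`. -/
theorem basic_complex_pairing_even_metabolic
    (Q : Type*) [Field Q] [Algebra (LaurentPolynomial ℂ) Q]
    [IsFractionRing (LaurentPolynomial ℂ) Q]
    (ξ : ℂ) (hξ : ‖ξ‖ = 1) (m : ℕ) (hm : 0 < m) (ε : ℝ) (hε : ε = 1 ∨ ε = -1) :
    ∀ x : LaurentPolynomial ℂ,
      ((T 1 - C ξ) ^ m ∣ x ↔
        ∀ y : LaurentPolynomial ℂ, (T 1 - C ξ) ^ m ∣ y →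
          (Submodule.Quotient.mk (lamEC Q ε ξ m x y)
              : Q ⧸ LinearMap.range (Algebra.linearMap (LaurentPolynomial ℂ) Q)) = 0) :=
  basic_complex_pairing_even_metabolic_general Q ξ m ε hε
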